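/- arXiv:2301.02932 — 2 statements merged into one kernel-verified Lean document; each statement's English description precedes it below -/
import Mathlib

section
/- Let Σ̂ⁿ ⊂ S^{n+1} be a closed connected orientable immersed minimal hypersurface invariant under the antipodal map τ = −Id, and let Σ = Σ̂/{x ∼ −x} ⊂ ℝP^{n+1} be its quotient. If Σ is two-sided in ℝP^{n+1}, then the unit normal N of Σ̂, viewed as a map to ℝ^{n+2}, satisfies N(−x) = −N(x), and Ind(Σ) = Ind_E(Σ̂); if Σ is one-sided, then N(−x) = N(x) and Ind(Σ) = Ind_O(Σ̂). -/
noncomputable section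

open scoped RealInnerProductSpace

/-- The ambient Euclidean space `ℝ^{n+2}`. -/
abbrev E (n : ℕ) : Type := EuclideanSpace ℝ (Fin (n + 2))

/-- A (set-modelled) two-sided minimal hypersurface `Σⁿ` of the unit sphere
`S^{n+1} ⊂ ℝ^{n+2}`, together with the standard objects of its extrinsic geometry:
the unit normal `N`, the orthogonal projection `P x` onto the tangent space, the
shape operator `A` (Weingarten map), and the mean curvature vector `H` of `Σ` viewed
as a submanifold of `ℝ^{n+2}` (for a hypersurface of `S^{n+1}` which is minimal in the
sphere, `H x = −n·x`). -/
structure MinimalSphereHypersurface (n : ℕ) where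
  carrier : Set (E n)
  subset_sphere : ∀ x ∈ carrier, ‖x‖ = 1
  /-- unit normal field of `Σ` in `S^{n+1}` -/
  N : E n → E n
  N_unit : ∀ x ∈ carrier, ‖N x‖ = 1
  N_perp : ∀ x ∈ carrier, ⟪N x, x⟫ = 0
  N_diff : ∀ x ∈ carrier, DifferentiableAt ℝ N x
  /-- orthogonal projection onto the tangent space `T_xΣ ⊂ ℝ^{n+2}` -/
  P : E n → E n →ₗ[ℝ] E n
  P_symm : ∀ x ∈ carrier, ∀ u v, ⟪P x u, v⟫ = ⟪u, P x v⟫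
  P_idem : ∀ x ∈ carrier, ∀ v, P x (P x v) = P x v
  P_pos : ∀ x ∈ carrier, P x x = 0
  P_normal : ∀ x ∈ carrier, P x (N x) = 0
  P_tangent : ∀ x ∈ carrier, ∀ v, ⟪v, x⟫ = 0 → ⟪v, N x⟫ = 0 → P x v = v
  /-- the shape operator -/
  A : E n → E n →ₗ[ℝ] E n
  /-- Weingarten formula: `A_x v = −(D_v N)^⊤` -/
  weingarten : ∀ x ∈ carrier, ∀ v, A x v = - P x (fderiv ℝ N x (P x v))
  /-- mean curvature vector of `Σ ⊂ ℝ^{n+2}` -/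
  H : E n → E n
  H_eq : ∀ x ∈ carrier, H x = (LinearMap.trace ℝ (E n) (A x)) • N x - (n : ℝ) • x
  /-- minimality of `Σ` in `S^{n+1}`: the mean curvature `tr A` vanishes -/
  minimal : ∀ x ∈ carrier, LinearMap.trace ℝ (E n) (A x) = 0

namespace MinimalSphereHypersurface

variable {n : ℕ} (Φ : MinimalSphereHypersurface n)

/-- The surface gradient `∇^Σ f = (∇̄f)^⊤`, the tangential projection of the ambient
gradient. -/
def sgrad (f : E n → ℝ) (x : E n) : E n := Φ.P x (gradient f x)

/-- The Laplace–Beltrami operator of the induced metric on `Σ`, expressed through an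
ambient extension by the standard formula `Δ_Σ f = tr(P ∘ Hess f ∘ P) + ⟨∇̄f, H⟩`. -/
def slap (f : E n → ℝ) (x : E n) : ℝ :=
  LinearMap.trace ℝ (E n)
    ((Φ.P x).comp (((fderiv ℝ (gradient f) x).toLinearMap).comp (Φ.P x)))
    + ⟪gradient f x, Φ.H x⟫

/-- The squared norm `|II|²` of the second fundamental form, i.e. `tr(A²)`. -/
def iisq (x : E n) : ℝ := LinearMap.trace ℝ (E n) ((Φ.A x).comp (Φ.A x))

/-- The scalar Jacobi operator `𝓛 = Δ + |II|² + n` of the minimal hypersurface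
`Σⁿ ⊂ S^{n+1}`. -/
def jacobi (f : E n → ℝ) (x : E n) : ℝ := Φ.slap f x + (Φ.iisq x + n) * f x

end MinimalSphereHypersurface

/-- The subspace of ambient functions that are even on `carrier` under the antipodal map. -/
def evenOn {n : ℕ} (carrier : Set (E n)) : Submodule ℝ (E n → ℝ) where
  carrier := {u | ∀ x ∈ carrier, u (-x) = u x}
  add_mem' := fun ha hb x hx => by simp [ha x hx, hb x hx]
  zero_mem' := fun _ _ => rfl
  smul_mem' := fun c u hu x hx => by simp [hu x hx]

/-- The subspace of ambient functions that are odd on `carrier` under the antipodal map. -/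
def oddOn {n : ℕ} (carrier : Set (E n)) : Submodule ℝ (E n → ℝ) where
  carrier := {u | ∀ x ∈ carrier, u (-x) = -u x}
  add_mem' := fun ha hb x hx => by simp [ha x hx, hb x hx]; ring
  zero_mem' := fun _ _ => by simp
  smul_mem' := fun c u hu x hx => by simp [hu x hx]

/-- Scalar functions `φ` on `Σ̂` such that `φ·N` is antipodally equivariant, i.e.
`φ(−x)·N(−x) = −(φ(x)·N(x))`.  Under the identification `ℝP^{n+1} = S^{n+1}/±`, these
are exactly the normal vector fields of the quotient hypersurface `Σ = Σ̂/{x ∼ −x}`. -/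
def quotientNormalFields {n : ℕ} (Φ : MinimalSphereHypersurface n) :
    Submodule ℝ (E n → ℝ) where
  carrier := {u | ∀ x ∈ Φ.carrier, u (-x) • Φ.N (-x) = -(u x • Φ.N x)}
  add_mem' := fun ha hb x hx => by
    simp only [Pi.add_apply, add_smul, ha x hx, hb x hx]; abel
  zero_mem' := fun _ _ => by simp
  smul_mem' := fun c u hu x hx => by
    simp only [Pi.smul_apply, smul_eq_mul, mul_smul, hu x hx, smul_neg]
  
/-- Morse index of a quadratic form `Q` over functions on `carrier` (identifying functions
whose restrictions to `carrier` agree), constrained to lie in the subspace `C`. -/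
def carrierMorseIndex {n : ℕ} (Q : (E n → ℝ) → ℝ) (carrier : Set (E n))
    (C : Submodule ℝ (E n → ℝ)) : ℕ∞ :=
  ⨆ S ∈ {S : Submodule ℝ (E n → ℝ) | S ≤ C ∧
      (∀ u ∈ S, u ≠ 0 → ∃ x ∈ carrier, u x ≠ 0) ∧
      (∀ u ∈ S, u ≠ 0 → Q u < 0)},
    (Module.finrank ℝ ↥S : ℕ∞)

/-- The quotient hypersurface `Σ = Σ̂/{x ∼ −x} ⊂ ℝP^{n+1}` is two-sided iff it carries a
global unit normal, i.e. iff there is a continuous choice `ν(x) = ±N(x)` with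
`ν(−x) = −ν(x)` (a normal vector at `[x] ∈ ℝP^{n+1}` being an equivalence class
`(x,v) ∼ (−x,−v)`). -/
def IsTwoSidedQuotient {n : ℕ} (Φ : MinimalSphereHypersurface n) : Prop :=
  ∃ ν : E n → E n, ContinuousOn ν Φ.carrier ∧
    (∀ x ∈ Φ.carrier, ν x = Φ.N x ∨ ν x = -Φ.N x) ∧
    (∀ x ∈ Φ.carrier, ν (-x) = -ν x)

/-!
Since `P` is antipodally invariant, `N(−x)` is a unit normal of `Σ̂` at `x`, so
`N(−x) = ±N(x)`; by continuity and connectedness the sign is the same everywhere. A global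
normal `ν = ±N` of the quotient is likewise `ν = N` or `ν = −N` throughout, and `ν(−x) = −ν(x)`
then forces `N` to be odd; conversely an odd `N` is itself such a `ν`. Hence `N` is odd exactly
when `Σ` is two-sided and even otherwise, and `φN` is antipodally equivariant iff `φ` is even,
resp. odd, so the two constrained index problems coincide.
-/

open Set

theorem IsPreconnected.eqOn_or_eqOn_neg_of_eq_or_eq_neg {α F : Type*} [TopologicalSpace α]
    [NormedAddCommGroup F] [InnerProductSpace ℝ F] {s : Set α} (hs : IsPreconnected s)
    {f g : α → F} (hf : ContinuousOn f s) (hg : ContinuousOn g s)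
    (hg_ne : ∀ x ∈ s, g x ≠ 0) (hfg : ∀ x ∈ s, f x = g x ∨ f x = -g x) :
    EqOn f g s ∨ EqOn f (-g) s := by
  have hsq : EqOn ((fun x => ⟪f x, g x⟫) ^ 2) ((fun x => ⟪g x, g x⟫) ^ 2) s := fun x hx => by
    rcases hfg x hx with h | h <;> simp [h]
  have hgg : ∀ {x}, x ∈ s → ⟪g x, g x⟫ ≠ 0 := fun hx => inner_self_ne_zero.mpr (hg_ne _ hx)
  rcases hs.eq_or_eq_neg_of_sq_eq (hf.inner hg) (hg.inner hg) hsq hgg with h | h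
  · refine .inl fun x hx => (hfg x hx).resolve_right fun hneg => hgg hx ?_
    have := h hx
    simp only [hneg, inner_neg_left] at this
    linarith
  · refine .inr fun x hx => (hfg x hx).resolve_left fun hpos => hgg hx ?_
    have := h hx
    simp only [hpos, Pi.neg_apply] at this
    linarith

namespace MinimalSphereHypersurface

variable {n : ℕ} (Φ : MinimalSphereHypersurface n)

theorem N_ne_zero {x : E n} (hx : x ∈ Φ.carrier) : Φ.N x ≠ 0 :=
  norm_ne_zero_iff.mp (by simp [Φ.N_unit x hx])

/-- The normal space of `Σ` in the sphere is the line spanned by `N`. -/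
theorem eq_inner_smul_N {x : E n} (hx : x ∈ Φ.carrier) {v : E n} (hvx : ⟪v, x⟫ = 0)
    (hPv : Φ.P x v = 0) : v = ⟪v, Φ.N x⟫ • Φ.N x := by
  set w := v - ⟪v, Φ.N x⟫ • Φ.N x
  have hwx : ⟪w, x⟫ = 0 := by
    simp [w, inner_sub_left, inner_smul_left, Φ.N_perp x hx, hvx]
  have hwN : ⟪w, Φ.N x⟫ = 0 := by
    simp [w, inner_sub_left, inner_smul_left, Φ.N_unit x hx]
  have hPw : Φ.P x w = 0 := by simp [w, hPv, Φ.P_normal x hx]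
  exact sub_eq_zero.mp ((Φ.P_tangent x hx w hwx hwN).symm.trans hPw)

theorem N_neg_eq_or_eq_neg (hsym : ∀ x ∈ Φ.carrier, -x ∈ Φ.carrier)
    (hPsym : ∀ x ∈ Φ.carrier, Φ.P (-x) = Φ.P x) {x : E n} (hx : x ∈ Φ.carrier) :
    Φ.N (-x) = Φ.N x ∨ Φ.N (-x) = -Φ.N x := by
  have hx' := hsym x hx
  have hvx : ⟪Φ.N (-x), x⟫ = 0 := by simpa using Φ.N_perp _ hx'
  have hPv : Φ.P x (Φ.N (-x)) = 0 := hPsym x hx ▸ Φ.P_normal _ hx'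
  have hv := Φ.eq_inner_smul_N hx hvx hPv
  have hc : |⟪Φ.N (-x), Φ.N x⟫| = 1 := by
    simpa [norm_smul, Φ.N_unit x hx, Φ.N_unit _ hx'] using (congrArg norm hv).symm
  rcases abs_eq zero_le_one |>.mp hc with h | h
  · exact .inl (by rw [hv, h, one_smul])
  · exact .inr (by rw [hv, h, neg_one_smul])

theorem N_even_or_N_odd (hconn : IsPreconnected Φ.carrier)
    (hsym : ∀ x ∈ Φ.carrier, -x ∈ Φ.carrier) (hNcont : ContinuousOn Φ.N Φ.carrier)
    (hPsym : ∀ x ∈ Φ.carrier, Φ.P (-x) = Φ.P x) :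
    (∀ x ∈ Φ.carrier, Φ.N (-x) = Φ.N x) ∨ ∀ x ∈ Φ.carrier, Φ.N (-x) = -Φ.N x := by
  rcases hconn.eqOn_or_eqOn_neg_of_eq_or_eq_neg
      (hNcont.comp continuous_neg.continuousOn hsym) hNcont (fun x hx => Φ.N_ne_zero hx)
      (fun x hx => Φ.N_neg_eq_or_eq_neg hsym hPsym hx) with h | h
  · exact .inl fun x hx => h hx
  · exact .inr fun x hx => h hx

end MinimalSphereHypersurface

namespace IsTwoSidedQuotient

variable {n : ℕ} {Φ : MinimalSphereHypersurface n}

theorem N_neg (h : IsTwoSidedQuotient Φ) (hconn : IsPreconnected Φ.carrier)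
    (hsym : ∀ x ∈ Φ.carrier, -x ∈ Φ.carrier) (hNcont : ContinuousOn Φ.N Φ.carrier) :
    ∀ x ∈ Φ.carrier, Φ.N (-x) = -Φ.N x := by
  obtain ⟨ν, hνcont, hνN, hνneg⟩ := h
  intro x hx
  rcases hconn.eqOn_or_eqOn_neg_of_eq_or_eq_neg hνcont hNcont
      (fun x hx => Φ.N_ne_zero hx) hνN with hν | hν
  · rw [← hν hx, ← hν (hsym x hx), hνneg x hx]
  · have := hνneg x hx
    rw [hν hx, hν (hsym x hx), Pi.neg_apply, Pi.neg_apply, neg_neg] at this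
    exact neg_eq_iff_eq_neg.mp this

end IsTwoSidedQuotient

theorem isTwoSidedQuotient_of_N_neg {n : ℕ} {Φ : MinimalSphereHypersurface n}
    (hNcont : ContinuousOn Φ.N Φ.carrier) (hanti : ∀ x ∈ Φ.carrier, Φ.N (-x) = -Φ.N x) :
    IsTwoSidedQuotient Φ :=
  ⟨Φ.N, hNcont, fun _ _ => .inl rfl, hanti⟩

theorem quotientNormalFields_eq_evenOn {n : ℕ} {Φ : MinimalSphereHypersurface n}
    (hanti : ∀ x ∈ Φ.carrier, Φ.N (-x) = -Φ.N x) :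
    quotientNormalFields Φ = evenOn Φ.carrier := by
  ext u
  refine forall₂_congr fun x hx => ?_
  rw [hanti x hx, smul_neg, neg_inj]
  exact (smul_left_injective ℝ (Φ.N_ne_zero hx)).eq_iff

theorem quotientNormalFields_eq_oddOn {n : ℕ} {Φ : MinimalSphereHypersurface n}
    (heven : ∀ x ∈ Φ.carrier, Φ.N (-x) = Φ.N x) :
    quotientNormalFields Φ = oddOn Φ.carrier := by
  ext u
  refine forall₂_congr fun x hx => ?_
  rw [heven x hx, ← neg_smul]
  exact (smul_left_injective ℝ (Φ.N_ne_zero hx)).eq_iff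

theorem quotient_index_even_odd_general {n : ℕ} (Φ : MinimalSphereHypersurface n)
    (hconn : IsConnected Φ.carrier)
    (hsym : ∀ x ∈ Φ.carrier, -x ∈ Φ.carrier)
    (hNcont : ContinuousOn Φ.N Φ.carrier)
    (hPsym : ∀ x ∈ Φ.carrier, Φ.P (-x) = Φ.P x) :
    (IsTwoSidedQuotient Φ →
      (∀ x ∈ Φ.carrier, Φ.N (-x) = -Φ.N x) ∧
      ∀ Q : (E n → ℝ) → ℝ,
        carrierMorseIndex Q Φ.carrier (quotientNormalFields Φ) =
          carrierMorseIndex Q Φ.carrier (evenOn Φ.carrier)) ∧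
    (¬ IsTwoSidedQuotient Φ →
      (∀ x ∈ Φ.carrier, Φ.N (-x) = Φ.N x) ∧
      ∀ Q : (E n → ℝ) → ℝ,
        carrierMorseIndex Q Φ.carrier (quotientNormalFields Φ) =
          carrierMorseIndex Q Φ.carrier (oddOn Φ.carrier)) := by
  refine ⟨fun htwo => ?_, fun hone => ?_⟩
  · have hanti := htwo.N_neg hconn.isPreconnected hsym hNcont
    exact ⟨hanti, fun Q => by rw [quotientNormalFields_eq_evenOn hanti]⟩
  · have heven := (Φ.N_even_or_N_odd hconn.isPreconnected hsym hNcont hPsym).resolve_right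
      fun hanti => hone (isTwoSidedQuotient_of_N_neg hNcont hanti)
    exact ⟨heven, fun Q => by rw [quotientNormalFields_eq_oddOn heven]⟩

/-- Let `Σ̂ⁿ ⊂ S^{n+1}` be a closed connected orientable immersed minimal
hypersurface invariant under the antipodal map `τ = −Id`, and let `Σ = Σ̂/{x ∼ −x}` be its
quotient in `ℝP^{n+1}`.  If `Σ` is two-sided, then the unit normal `N` of `Σ̂` satisfies
`N(−x) = −N(x)` and `Ind(Σ) = Ind_E(Σ̂)`; if `Σ` is one-sided, then `N(−x) = N(x)` and
`Ind(Σ) = Ind_O(Σ̂)`.  Here `Ind(Σ)` is the Morse index of the index form over the normal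
fields of the quotient, and `Ind_E, Ind_O` are the even and odd Morse indices of `Σ̂` with
respect to the antipodal involution. -/
theorem quotient_index_even_odd {n : ℕ} (Φ : MinimalSphereHypersurface n)
    (hne : Φ.carrier.Nonempty) (hconn : IsConnected Φ.carrier)
    (hcpt : IsCompact Φ.carrier)
    (hsym : ∀ x ∈ Φ.carrier, -x ∈ Φ.carrier)
    (hNcont : ContinuousOn Φ.N Φ.carrier)
    (hPsym : ∀ x ∈ Φ.carrier, Φ.P (-x) = Φ.P x) :
    (IsTwoSidedQuotient Φ →
      (∀ x ∈ Φ.carrier, Φ.N (-x) = -Φ.N x) ∧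
      ∀ Q : (E n → ℝ) → ℝ,
        carrierMorseIndex Q Φ.carrier (quotientNormalFields Φ) =
          carrierMorseIndex Q Φ.carrier (evenOn Φ.carrier)) ∧
    (¬ IsTwoSidedQuotient Φ →
      (∀ x ∈ Φ.carrier, Φ.N (-x) = Φ.N x) ∧
      ∀ Q : (E n → ℝ) → ℝ,
        carrierMorseIndex Q Φ.carrier (quotientNormalFields Φ) =
          carrierMorseIndex Q Φ.carrier (oddOn Φ.carrier)) :=
  quotient_index_even_odd_general Φ hconn hsym hNcont hPsym
end
end

section
/- Let m ≥ 4 be even. With respect to the antipodal involution τ = R_{Σ^0} ∘ R_{Σ^{π/2}} ∘ R_{Σ_0} ∘ R_{Σ_{π/2}}, assume: the Jacobi index contributions are Ind(V^{--}) = 0; Ind(V^{+-}) = Ind(V^{-+}) = 1 with first eigenfunctions odd under exactly one of the four reflections (hence τ-odd); and within V^{++}, the τ-odd part contributes Ind(V^{++}_{+-}) + Ind(V^{++}_{-+}) = m and the τ-even part contributes Ind(V^{++}_{++}) + Ind(V^{++}_{--}) = m − 1. Then Ind_O(ξ_{m−1,1}) = m + 2 and Ind_E(ξ_{m−1,1})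 = m − 1; moreover since all six basis Jacobi fields are each odd under exactly two of the four commuting reflections, Nul_E(ξ_{m−1,1}) = 6 and Nul_O(ξ_{m−1,1}) = 0. -/
noncomputable section

/-- The subspace of functions even with respect to the involution `τ`. -/
def evenSub {X : Type} (τ : X → X) : Submodule ℝ (X → ℝ) where
  carrier := {u | ∀ x, u (τ x) = u x}
  add_mem' := fun ha hb x => by simp [ha x, hb x]
  zero_mem' := fun _ => rfl
  smul_mem' := fun c u hu x => by simp [hu x]

/-- The subspace of functions odd with respect to the involution `τ`. -/
def oddSub {X : Type} (τ : X → X) : Submodule ℝ (X → ℝ) where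
  carrier := {u | ∀ x, u (τ x) = -u x}
  add_mem' := fun ha hb x => by simp [ha x, hb x]; ring
  zero_mem' := fun _ => by simp
  smul_mem' := fun c u hu x => by simp [hu x]

/-!
A basis Jacobi field odd under exactly two of the four reflections picks up the sign
`(-1)^2 = 1` under their composition `τ`, so all of `J` is `τ`-even; since no nonzero function
is both `τ`-even and `τ`-odd, `J` has no `τ`-odd part. The index identities are bookkeeping:
`Ind(V^{±∓}) = 1` with `τ`-odd first eigenfunction forces its `τ`-even part to vanish.
-/

variable {X : Type}

theorem mem_evenSub_iff {τ : X → X} {u : X → ℝ} : u ∈ evenSub τ ↔ u ∘ τ = u :=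
  funext_iff.symm

theorem disjoint_evenSub_oddSub (τ : X → X) : Disjoint (evenSub τ) (oddSub τ) := by
  rw [Submodule.disjoint_def]
  intro u hueven huodd
  funext x
  have h := (hueven x).symm.trans (huodd x)
  simp only [Pi.zero_apply]
  linarith

theorem comp_comp_eq_smul {u : X → ℝ} {f g : X → X} {a c : ℝ}
    (hf : u ∘ f = a • u) (hg : u ∘ g = c • u) : u ∘ (f ∘ g) = (a * c) • u := by
  rw [← Function.comp_assoc, hf, mul_smul, ← hg]
  rfl

theorem prod_ite_mem_neg_one {ι : Type*} [Fintype ι] [DecidableEq ι] (s : Finset ι) :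
    ∏ j, (if j ∈ s then (-1 : ℝ) else 1) = (-1) ^ s.card := by
  rw [Finset.prod_ite_mem, Finset.univ_inter, Finset.prod_const]

theorem mem_evenSub_of_even_card {r : Fin 4 → X → X} {u : X → ℝ} {s : Finset (Fin 4)}
    (hs : Even s.card) (hu : ∀ j, u ∘ r j = (if j ∈ s then (-1 : ℝ) else 1) • u) :
    u ∈ evenSub (r 0 ∘ r 1 ∘ r 2 ∘ r 3) := by
  have hτ := comp_comp_eq_smul (hu 0) <| comp_comp_eq_smul (hu 1) <|
    comp_comp_eq_smul (hu 2) (hu 3)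
  rw [mem_evenSub_iff, hτ, ← mul_assoc, ← mul_assoc,
    ← Fin.prod_univ_four fun j ↦ if j ∈ s then (-1 : ℝ) else 1, prod_ite_mem_neg_one,
    hs.neg_one_pow, one_smul]

theorem inf_oddSub_eq_bot {τ : X → X} {J : Submodule ℝ (X → ℝ)} (hJ : J ≤ evenSub τ) :
    J ⊓ oddSub τ = ⊥ :=
  ((disjoint_evenSub_oddSub τ).mono_left hJ).eq_bot

theorem lawson_even_odd_index_nullity_general
    (m : ℕ)
    (X : Type) (r : Fin 4 → X → X)
    (τ : X → X) (hτ : τ = r 0 ∘ r 1 ∘ r 2 ∘ r 3)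
    -- index bookkeeping with respect to the τ-parity decomposition of each V^{±±}
    (IndEpp IndOpp IndEpm IndOpm IndEmp IndOmp IndEmm IndOmm IndE IndO : ℕ)
    (hmm : IndEmm + IndOmm = 0)                      -- Ind(V^{--}) = 0
    (hpm : IndEpm + IndOpm = 1) (hpmodd : IndOpm = 1) -- Ind(V^{+-}) = 1, first eigenfn τ-odd
    (hmp : IndEmp + IndOmp = 1) (hmpodd : IndOmp = 1) -- Ind(V^{-+}) = 1, first eigenfn τ-odd
    (hppO : IndOpp = m)                               -- Ind(V^{++}_{+-}) + Ind(V^{++}_{-+})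
    (hppE : IndEpp = m - 1)                           -- Ind(V^{++}_{++}) + Ind(V^{++}_{--})
    (hE : IndE = IndEpp + IndEpm + IndEmp + IndEmm)
    (hO : IndO = IndOpp + IndOpm + IndOmp + IndOmm)
    -- the space of Jacobi fields and its basis of non-exceptional Jacobi fields
    (J : Submodule ℝ (X → ℝ)) (hJ : Module.finrank ℝ ↥J = 6)
    (b : Fin 6 → X → ℝ) (hspan : Submodule.span ℝ (Set.range b) = J)
    (hparity : ∀ i : Fin 6, ∃ s : Finset (Fin 4), s.card = 2 ∧
      ∀ j : Fin 4, (b i) ∘ (r j) = (if j ∈ s then (-1 : ℝ) else 1) • b i) :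
    IndO = m + 2 ∧ IndE = m - 1 ∧
    Module.finrank ℝ ↥(J ⊓ evenSub τ) = 6 ∧
    Module.finrank ℝ ↥(J ⊓ oddSub τ) = 0 := by
  have hJeven : J ≤ evenSub τ := by
    rw [← hspan, Submodule.span_le, Set.range_subset_iff]
    intro i
    obtain ⟨s, hcard, hsign⟩ := hparity i
    exact hτ ▸ mem_evenSub_of_even_card (hcard ▸ even_two) hsign
  refine ⟨by omega, by omega, ?_, ?_⟩
  · rw [inf_eq_left.mpr hJeven, hJ]
  · rw [inf_oddSub_eq_bot hJeven, finrank_bot]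

/-- Let `m ≥ 4` be even.  On the Lawson surface `ξ_{m−1,1} ⊂ S³` with its
four commuting reflection symmetries `r 0 = R_{Σ^0}`, `r 1 = R_{Σ^{π/2}}`, `r 2 = R_{Σ_0}`,
`r 3 = R_{Σ_{π/2}}`, whose composition is the antipodal involution `τ`, assume the index
contributions of the Jacobi operator on the invariant subspaces `V^{±±}` are:
`Ind(V^{−−}) = 0`; `Ind(V^{+−}) = Ind(V^{−+}) = 1` with the corresponding first
eigenfunctions `τ`-odd; and within `V^{++}` the `τ`-odd part contributes
`Ind(V^{++}_{+−}) + Ind(V^{++}_{−+}) = m` and the `τ`-even part contributes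
`Ind(V^{++}_{++}) + Ind(V^{++}_{−−}) = m − 1`.  Then `Ind_O(ξ_{m−1,1}) = m + 2` and
`Ind_E(ξ_{m−1,1}) = m − 1`.  Moreover, since the (6-dimensional) space `J` of Jacobi fields
is spanned by six fields each odd under exactly two of the four reflections (hence
`τ`-even), the even and odd nullities are `Nul_E = 6` and `Nul_O = 0`. -/
theorem lawson_even_odd_index_nullity
    (m : ℕ) (hm : 4 ≤ m) (hme : Even m)
    (X : Type) (r : Fin 4 → X → X)
    (hinv : ∀ j, r j ∘ r j = id)
    (hcomm : ∀ i j, r i ∘ r j = r j ∘ r i)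
    (τ : X → X) (hτ : τ = r 0 ∘ r 1 ∘ r 2 ∘ r 3)
    -- index bookkeeping with respect to the τ-parity decomposition of each V^{±±}
    (IndEpp IndOpp IndEpm IndOpm IndEmp IndOmp IndEmm IndOmm IndE IndO : ℕ)
    (hmm : IndEmm + IndOmm = 0)                      -- Ind(V^{--}) = 0
    (hpm : IndEpm + IndOpm = 1) (hpmodd : IndOpm = 1) -- Ind(V^{+-}) = 1, first eigenfn τ-odd
    (hmp : IndEmp + IndOmp = 1) (hmpodd : IndOmp = 1) -- Ind(V^{-+}) = 1, first eigenfn τ-odd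
    (hppO : IndOpp = m)                               -- Ind(V^{++}_{+-}) + Ind(V^{++}_{-+})
    (hppE : IndEpp = m - 1)                           -- Ind(V^{++}_{++}) + Ind(V^{++}_{--})
    (hE : IndE = IndEpp + IndEpm + IndEmp + IndEmm)
    (hO : IndO = IndOpp + IndOpm + IndOmp + IndOmm)
    -- the space of Jacobi fields and its basis of non-exceptional Jacobi fields
    (J : Submodule ℝ (X → ℝ)) (hJ : Module.finrank ℝ ↥J = 6)
    (b : Fin 6 → X → ℝ) (hspan : Submodule.span ℝ (Set.range b) = J)
    (hparity : ∀ i : Fin 6, ∃ s : Finset (Fin 4), s.card = 2 ∧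
      ∀ j : Fin 4, (b i) ∘ (r j) = (if j ∈ s then (-1 : ℝ) else 1) • b i) :
    IndO = m + 2 ∧ IndE = m - 1 ∧
    Module.finrank ℝ ↥(J ⊓ evenSub τ) = 6 ∧
    Module.finrank ℝ ↥(J ⊓ oddSub τ) = 0 :=
  lawson_even_odd_index_nullity_general m X r τ hτ IndEpp IndOpp IndEpm IndOpm IndEmp IndOmp IndEmm
    IndOmm IndE IndO hmm hpm hpmodd hmp hmpodd hppO hppE hE hO J hJ b hspan hparity
end
end
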